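/- Let F and G be polynomials over a field of degrees m+n−1 and m respectively, with G = 1 − X^k·G₁, and suppose G divides F. Then the quotient Q = F/G has at most #F·(#G + ⌈n/k⌉ − 2)^{⌈n/k⌉ − 1}/(⌈n/k⌉ − 1)! nonzero monomials. -/

import Mathlib

/-!
Write `G = 1 - y` with `y = X ^ k * G₁` and let `t = ⌈n / k⌉`. Then
`F * (1 + y + ⋯ + y ^ (t - 1)) = Q * (1 - y ^ t) = Q - Q * G₁ ^ t * X ^ (k * t)`, and `Q` has degree
`n - 1 < k * t`, so `Q` is a truncation of `F * ∑ y ^ i`. Every exponent of `G₁ ^ i` is a sum of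
`i` exponents of `G₁`, so `#(G₁ ^ i)` is at most the number of size-`i` multisets from a `g`-set,
`g = #G₁ ≤ #G - 1`. Summing over `i < t` gives `#Q ≤ #F * C(t - 1 + g, t - 1)`, and
`C(N, r) ≤ N ^ r / r!` finishes.
-/

open Polynomial Finset

section SupportBounds

variable {R : Type*}

lemma exists_sym_sum_eq_of_mem_support_pow [Semiring R] {P : R[X]} :
    ∀ {i j : ℕ}, j ∈ (P ^ i).support →
      ∃ s : Sym P.support i, ((s : Multiset P.support).map Subtype.val).sum = j
  | 0, j, hj => by
      obtain ⟨rfl, -⟩ : j = 0 ∧ _ := by simpa [coeff_one] using hj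
      exact ⟨Sym.nil, by simp⟩
  | i + 1, j, hj => by
      rw [pow_succ, mem_support_iff, coeff_mul] at hj
      obtain ⟨⟨a, b⟩, hab, hne⟩ := exists_ne_zero_of_sum_ne_zero hj
      obtain ⟨s, hs⟩ := exists_sym_sum_eq_of_mem_support_pow
        (mem_support_iff.mpr (left_ne_zero_of_mul hne))
      refine ⟨⟨b, mem_support_iff.mpr (right_ne_zero_of_mul hne)⟩ ::ₛ s, ?_⟩
      rw [HasAntidiagonal.mem_antidiagonal] at hab
      simp only at hab hs
      rw [Sym.coe_cons, Multiset.map_cons, Multiset.sum_cons, hs, ← hab, add_comm]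

lemma card_support_pow_le [Semiring R] (P : R[X]) (i : ℕ) :
    #(P ^ i).support ≤ (#P.support).multichoose i := by
  classical
  calc #(P ^ i).support
      ≤ #((univ : Finset (Sym P.support i)).image
          fun (s : Sym P.support i) ↦ ((s : Multiset P.support).map Subtype.val).sum) := by
        refine card_le_card fun j hj ↦ ?_
        obtain ⟨s, hs⟩ := exists_sym_sum_eq_of_mem_support_pow hj
        exact mem_image.mpr ⟨s, mem_univ _, hs⟩
    _ ≤ Fintype.card (Sym P.support i) := card_image_le
    _ = (#P.support).multichoose i := by rw [Sym.card_sym_eq_multichoose, Fintype.card_coe]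

lemma card_support_sum_le [Semiring R] {ι : Type*} (s : Finset ι) (f : ι → R[X]) :
    #(∑ i ∈ s, f i).support ≤ ∑ i ∈ s, #(f i).support := by
  classical
  refine (card_le_card fun j hj ↦ ?_).trans card_biUnion_le
  rw [mem_support_iff, finsetSum_coeff] at hj
  obtain ⟨i, hi, hne⟩ := exists_ne_zero_of_sum_ne_zero hj
  exact mem_biUnion.mpr ⟨i, hi, mem_support_iff.mpr hne⟩

lemma card_support_lt_card_support_one_sub_X_pow_mul [Ring R] [Nontrivial R] {k : ℕ}
    (hk : 0 < k) (P : R[X]) : #P.support < #(1 - X ^ k * P).support := by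
  have hsub : insert 0 (P.support.map (addRightEmbedding k)) ⊆ (1 - X ^ k * P).support := by
    intro j hj
    rw [mem_support_iff, coeff_sub, coeff_one, coeff_X_pow_mul']
    rcases mem_insert.mp hj with rfl | hj
    · simp [Nat.not_le.mpr hk]
    · obtain ⟨a, ha, rfl⟩ := mem_map.mp hj
      simpa [hk.ne'] using mem_support_iff.mp ha
  calc #P.support < #(insert 0 (P.support.map (addRightEmbedding k))) := by
        rw [card_insert_of_notMem (by simp [hk.ne']), card_map]; omega
    _ ≤ _ := card_le_card hsub

end SupportBounds

section Quotient

variable {R : Type*} [CommRing R]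

lemma coeff_eq_coeff_mul_geom_sum {F P Q : R[X]} {k t j : ℕ} (hF : F = (1 - X ^ k * P) * Q)
    (hj : j < k * t) : Q.coeff j = (F * ∑ i ∈ range t, (X ^ k * P) ^ i).coeff j := by
  have hgeom : F * ∑ i ∈ range t, (X ^ k * P) ^ i = Q - (Q * P ^ t) * X ^ (k * t) := by
    rw [hF, mul_comm (1 - _), mul_assoc, mul_neg_geom_sum, mul_pow, ← pow_mul]
    ring
  rw [hgeom, coeff_sub, coeff_mul_X_pow', if_neg (by omega), sub_zero]

lemma card_support_mul_geom_sum_le (F P : R[X]) (k t : ℕ) :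
    #(F * ∑ i ∈ range t, (X ^ k * P) ^ i).support ≤
      #F.support * ∑ i ∈ range t, (#P.support).multichoose i := by
  rw [mul_sum, mul_sum]
  refine (card_support_sum_le _ _).trans (sum_le_sum fun i _ ↦ ?_)
  calc #(F * (X ^ k * P) ^ i).support
      ≤ #F.support * (#(X ^ (k * i) : R[X]).support * #(P ^ i).support) := by
        rw [mul_pow, ← pow_mul]
        exact card_support_mul_le.trans (Nat.mul_le_mul_left _ card_support_mul_le)
    _ ≤ #F.support * (1 * (#P.support).multichoose i) := by
        have hX : #(X ^ (k * i) : R[X]).support ≤ 1 := by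
          rw [X_pow_eq_monomial]
          exact (card_le_card (support_monomial_subset _ _)).trans_eq (card_singleton _)
        gcongr
        exact card_support_pow_le P i
    _ = #F.support * (#P.support).multichoose i := by rw [one_mul]

lemma card_support_le_of_eq_one_sub_X_pow_mul_mul {F P Q : R[X]} {k t : ℕ}
    (hF : F = (1 - X ^ k * P) * Q) (ht : 1 ≤ t) (hQ : Q.natDegree < k * t) :
    #Q.support ≤ #F.support * (t - 1 + #P.support).choose (t - 1) := by
  have hsupp : Q.support ⊆ (F * ∑ i ∈ range t, (X ^ k * P) ^ i).support := fun j hj ↦ by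
    rw [mem_support_iff,
      ← coeff_eq_coeff_mul_geom_sum hF ((le_natDegree_of_mem_supp j hj).trans_lt hQ)]
    exact mem_support_iff.mp hj
  obtain ⟨s, rfl⟩ := Nat.exists_eq_add_of_le' ht
  calc #Q.support ≤ _ := card_le_card hsupp
    _ ≤ _ := card_support_mul_geom_sum_le F P k _
    _ = _ := by rw [Nat.sum_range_multichoose, Nat.add_sub_cancel, Nat.choose_symm_add]

end Quotient

theorem stmt7 {K : Type*} [Field K] (F G G₁ Q : K[X]) (m n k : ℕ) (hk : 1 ≤ k)
    (hn : 1 ≤ n) (hF : F.natDegree = m + n - 1) (hGdeg : G.natDegree = m)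
    (hG : G = 1 - X ^ k * G₁) (hQ : F = G * Q) :
    ((Q.support.card : ℝ)) ≤ (F.support.card : ℝ) *
      ((G.support.card : ℝ) + (⌈(n : ℝ) / k⌉₊ : ℝ) - 2) ^ (⌈(n : ℝ) / k⌉₊ - 1) /
      (Nat.factorial (⌈(n : ℝ) / k⌉₊ - 1)) := by
  set t := ⌈(n : ℝ) / k⌉₊
  have hkR : (0 : ℝ) < k := by exact_mod_cast hk
  have ht : 1 ≤ t := Nat.one_le_ceil_iff.mpr (div_pos (by exact_mod_cast hn) hkR)
  have hg : #G₁.support < #G.support :=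
    hG ▸ card_support_lt_card_support_one_sub_X_pow_mul hk G₁
  have hG0 : G ≠ 0 := fun h ↦ by simp [h] at hg
  have hnt : n ≤ k * t := by
    have := (div_le_iff₀ hkR).mp (Nat.le_ceil ((n : ℝ) / k))
    exact_mod_cast (show (n : ℝ) ≤ k * t by linarith)
  have hdeg : Q.natDegree + m ≤ m + n - 1 := by
    rcases eq_or_ne Q 0 with rfl | hQ0
    · simp only [natDegree_zero]; omega
    · rw [← hF, hQ, natDegree_mul hG0 hQ0, hGdeg, add_comm]
  have hQF := card_support_le_of_eq_one_sub_X_pow_mul_mul (hG ▸ hQ) ht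
    (show Q.natDegree < k * t by omega)
  have hbase : ((t - 1 + #G₁.support : ℕ) : ℝ) ≤ #G.support + t - 2 := by
    have : ((#G₁.support : ℕ) : ℝ) + 1 ≤ #G.support := by exact_mod_cast hg
    push_cast [Nat.cast_sub ht]; linarith
  calc (#Q.support : ℝ) ≤ #F.support * ((t - 1 + #G₁.support).choose (t - 1) : ℝ) := by
        exact_mod_cast hQF
    _ ≤ #F.support * (((t - 1 + #G₁.support : ℕ) : ℝ) ^ (t - 1) / (t - 1).factorial) := by
        gcongr; exact Nat.choose_le_pow_div _ _
    _ ≤ #F.support * ((#G.support + t - 2 : ℝ) ^ (t - 1) / (t - 1).factorial) := by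
        gcongr
    _ = _ := (mul_div_assoc ..).symm
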